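/- Let G_0, ..., G_{T-1} be random matrices in R^{m×n} and Q ∈ R^{m×m} a symmetric positive definite matrix such that E[G_t G_tᵀ] ⪯ Q² for every t. Then E[ ‖(Σ_{t=0}^{T-1} G_t G_tᵀ)^{1/2}‖_* ] ≤ √T · ‖Q‖_*, where ‖Q‖_* = tr(Q). -/

import Mathlib

/-!
Expanding `0 ≤ tr(Q⁻¹ (S^{1/2} - c Q)²)` gives, for `S ⪰ 0`, `Q ≻ 0` and `c > 0`, the trace
AM-GM inequality `tr S^{1/2} ≤ (c⁻¹ tr(Q⁻¹ S) + c tr Q) / 2`, whose right-hand side is linear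
in `S`. Apply it pointwise to `S = ∑ₜ Gₜ Gₜᵀ` and take expectations: `E S ⪯ T Q²` bounds
`tr(Q⁻¹ E S)` by `T tr Q`, and `c = √T` balances the two terms.
-/

open Matrix MeasureTheory
open scoped Classical

/-- The positive semidefinite square root of a positive semidefinite real matrix
(junk value `0` if the matrix is not positive semidefinite). -/
noncomputable def psdSqrt {k : ℕ} (X : Matrix (Fin k) (Fin k) ℝ) : Matrix (Fin k) (Fin k) ℝ :=
  if h : X.PosSemidef then
    h.1.eigenvectorUnitary.1 * diagonal ((↑) ∘ (√·) ∘ h.1.eigenvalues) *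
      (star h.1.eigenvectorUnitary : Matrix (Fin k) (Fin k) ℝ)
  else 0

/-- The trace (nuclear) norm of a real matrix: the sum of its singular values,
i.e. `tr((Aᵀ A)^{1/2})`. -/
noncomputable def nuclearNorm {m n : ℕ} (A : Matrix (Fin m) (Fin n) ℝ) : ℝ :=
  (psdSqrt (Aᵀ * A)).trace

open scoped MatrixOrder ComplexOrder

namespace Matrix

variable {ι : Type*} [Fintype ι]

lemma trace_mul_eq_sum_sum {R : Type*} [NonUnitalNonAssocSemiring R] (A B : Matrix ι ι R) :
    (A * B).trace = ∑ i, ∑ j, A i j * B j i := rfl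

section RCLike

variable {𝕜 : Type*} [RCLike 𝕜]

lemma PosSemidef.trace_mul_nonneg {A B : Matrix ι ι 𝕜} (hA : A.PosSemidef) (hB : B.PosSemidef) :
    0 ≤ (A * B).trace := by
  classical
  set R := CFC.sqrt B
  have hR : R.PosSemidef := (CFC.sqrt_nonneg B).posSemidef
  have hRR : R * R = B := CFC.sqrt_mul_sqrt_self B hB.nonneg
  calc 0 ≤ (R * A * Rᴴ).trace := (hA.mul_mul_conjTranspose_same R).trace_nonneg
    _ = (A * B).trace := by rw [hR.isHermitian.eq, trace_mul_cycle, hRR, trace_mul_comm]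

lemma PosSemidef.trace_mul_le_trace_mul {A B C : Matrix ι ι 𝕜} (hA : A.PosSemidef)
    (hBC : (C - B).PosSemidef) : (A * B).trace ≤ (A * C).trace := by
  have := hA.trace_mul_nonneg hBC
  rwa [mul_sub, trace_sub, sub_nonneg] at this

end RCLike

lemma two_mul_mul_trace_le [DecidableEq ι] {R Q : Matrix ι ι ℝ} (hR : R.IsHermitian)
    (hQ : Q.PosDef) (c : ℝ) :
    2 * c * R.trace ≤ (Q⁻¹ * (R * R)).trace + c ^ 2 * Q.trace := by
  have hdet : IsUnit Q.det := hQ.det_pos.ne'.isUnit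
  have hQQ : Q⁻¹ * Q = 1 := nonsing_inv_mul Q hdet
  have hsq : ((R - c • Q)ᴴ * (R - c • Q)).PosSemidef := posSemidef_conjTranspose_mul_self _
  have hcenter : (Q⁻¹ * R * Q).trace = R.trace := by
    rw [trace_mul_comm, ← mul_assoc, mul_nonsing_inv Q hdet, one_mul]
  have hexpand : Q⁻¹ * ((R - c • Q) * (R - c • Q)) =
      Q⁻¹ * (R * R) - c • (Q⁻¹ * R * Q) - c • R + c ^ 2 • Q := by
    simp only [sub_mul, mul_sub, Matrix.smul_mul, Matrix.mul_smul, smul_smul, ← mul_assoc,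
      hQQ, one_mul]
    module
  have := hQ.inv.posSemidef.trace_mul_nonneg hsq
  rw [(hR.sub (hQ.isHermitian.smul (IsSelfAdjoint.all c))).eq, hexpand] at this
  simp only [trace_add, trace_sub, trace_smul, hcenter, smul_eq_mul] at this
  linarith

end Matrix

lemma psdSqrt_eq_cfcSqrt {k : ℕ} {X : Matrix (Fin k) (Fin k) ℝ} (hX : X.PosSemidef) :
    psdSqrt X = CFC.sqrt X := by
  rw [CFC.sqrt_eq_real_sqrt X hX.nonneg, cfcₙ_eq_cfc, hX.1.cfc_eq, psdSqrt, dif_pos hX]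
  simp [IsHermitian.cfc, Unitary.conjStarAlgAut_apply]
  rfl

lemma nuclearNorm_eq_trace {k : ℕ} {A : Matrix (Fin k) (Fin k) ℝ} (hA : A.PosSemidef) :
    nuclearNorm A = A.trace := by
  have hAA : (A * A).PosSemidef := by
    simpa only [hA.isHermitian.eq] using posSemidef_conjTranspose_mul_self A
  rw [nuclearNorm, ← conjTranspose_eq_transpose_of_trivial, hA.isHermitian.eq,
    psdSqrt_eq_cfcSqrt hAA, CFC.sqrt_mul_self A hA.nonneg]

lemma nuclearNorm_nonneg {m n : ℕ} (A : Matrix (Fin m) (Fin n) ℝ) : 0 ≤ nuclearNorm A := by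
  have hAA : (Aᵀ * A).PosSemidef := by
    simpa only [conjTranspose_eq_transpose_of_trivial] using posSemidef_conjTranspose_mul_self A
  rw [nuclearNorm, psdSqrt_eq_cfcSqrt hAA]
  exact (CFC.sqrt_nonneg _).posSemidef.trace_nonneg

lemma nuclearNorm_psdSqrt {k : ℕ} {X : Matrix (Fin k) (Fin k) ℝ} (hX : X.PosSemidef) :
    nuclearNorm (psdSqrt X) = (CFC.sqrt X).trace := by
  rw [psdSqrt_eq_cfcSqrt hX, nuclearNorm_eq_trace (CFC.sqrt_nonneg X).posSemidef]

lemma nuclearNorm_psdSqrt_le {k : ℕ} {S Q : Matrix (Fin k) (Fin k) ℝ} (hS : S.PosSemidef)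
    (hQ : Q.PosDef) {c : ℝ} (hc : 0 < c) :
    nuclearNorm (psdSqrt S) ≤ (c⁻¹ * (Q⁻¹ * S).trace + c * Q.trace) / 2 := by
  have hR : (CFC.sqrt S).IsHermitian := (CFC.sqrt_nonneg S).posSemidef.isHermitian
  have := two_mul_mul_trace_le hR hQ c
  rw [CFC.sqrt_mul_sqrt_self S hS.nonneg] at this
  rw [nuclearNorm_psdSqrt hS]
  field_simp
  linarith

section Expectation

variable {Ω ι : Type*} [MeasurableSpace Ω] {μ : Measure Ω} [Fintype ι]
  {S : Ω → Matrix ι ι ℝ}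

lemma integrable_trace_mul (hS : ∀ i j, Integrable (fun ω => S ω i j) μ) (A : Matrix ι ι ℝ) :
    Integrable (fun ω => (A * S ω).trace) μ := by
  simp only [trace_mul_eq_sum_sum]
  exact integrable_finsetSum _ fun i _ =>
    integrable_finsetSum _ fun j _ => (hS j i).const_mul _

lemma integral_trace_mul (hS : ∀ i j, Integrable (fun ω => S ω i j) μ) (A : Matrix ι ι ℝ) :
    ∫ ω, (A * S ω).trace ∂μ = (A * of fun i j => ∫ ω, S ω i j ∂μ).trace := by
  simp only [trace_mul_eq_sum_sum, of_apply]
  rw [integral_finsetSum (f := fun i ω => ∑ j, A i j * S ω j i) _ fun i _ =>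
    integrable_finsetSum _ fun j _ => (hS j i).const_mul _]
  refine Finset.sum_congr rfl fun i _ => ?_
  rw [integral_finsetSum (f := fun j ω => A i j * S ω j i) _ fun j _ => (hS j i).const_mul _]
  simp only [integral_const_mul]

variable {κ : Type*} [Fintype κ] {X : κ → Ω → Matrix ι ι ℝ}

lemma integrable_trace_mul_sum (hX : ∀ t i j, Integrable (fun ω => X t ω i j) μ)
    (A : Matrix ι ι ℝ) : Integrable (fun ω => (A * ∑ t, X t ω).trace) μ := by
  simp only [Matrix.mul_sum, trace_sum]
  exact integrable_finsetSum _ fun t _ => integrable_trace_mul (hX t) A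

lemma integral_trace_inv_mul_sum_le [DecidableEq ι]
    (hX : ∀ t i j, Integrable (fun ω => X t ω i j) μ)
    {Q : Matrix ι ι ℝ} (hQ : Q.PosDef)
    (hle : ∀ t, (Q * Q - of fun i j => ∫ ω, X t ω i j ∂μ).PosSemidef) :
    ∫ ω, (Q⁻¹ * ∑ t, X t ω).trace ∂μ ≤ Fintype.card κ * Q.trace := by
  have hterm : ∀ t, ∫ ω, (Q⁻¹ * X t ω).trace ∂μ ≤ Q.trace := fun t => by
    rw [integral_trace_mul (hX t)]
    calc _ ≤ (Q⁻¹ * (Q * Q)).trace := hQ.inv.posSemidef.trace_mul_le_trace_mul (hle t)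
      _ = Q.trace := by rw [← mul_assoc, nonsing_inv_mul Q hQ.det_pos.ne'.isUnit, one_mul]
  simp only [Matrix.mul_sum, trace_sum]
  rw [integral_finsetSum _ fun t _ => integrable_trace_mul (hX t) _]
  simpa using Finset.sum_le_sum fun t (_ : t ∈ Finset.univ) => hterm t

end Expectation

theorem stmt17_general (m n T : ℕ)
    (Ω : Type) [MeasurableSpace Ω] (μ : Measure Ω) [IsProbabilityMeasure μ]
    (G : Fin T → Ω → Matrix (Fin m) (Fin n) ℝ)
    (hint : ∀ t a b, Integrable (fun ω => (G t ω * (G t ω)ᵀ) a b) μ)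
    (Q : Matrix (Fin m) (Fin m) ℝ) (hQ : Q.PosDef)
    (hvar : ∀ t,
      (Q * Q - Matrix.of fun a b => ∫ ω, (G t ω * (G t ω)ᵀ) a b ∂μ).PosSemidef) :
    ∫ ω, nuclearNorm (psdSqrt (∑ t, G t ω * (G t ω)ᵀ)) ∂μ ≤
      Real.sqrt T * nuclearNorm Q := by
  have hS : ∀ ω, (∑ t, G t ω * (G t ω)ᵀ).PosSemidef := fun ω =>
    posSemidef_sum _ fun t _ => by
      rw [← conjTranspose_eq_transpose_of_trivial]; exact posSemidef_self_mul_conjTranspose _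
  rcases T.eq_zero_or_pos with rfl | hT
  · simp [psdSqrt_eq_cfcSqrt PosSemidef.zero, nuclearNorm_eq_trace PosSemidef.zero]
  set c := Real.sqrt T
  have hc : 0 < c := Real.sqrt_pos.2 (by exact_mod_cast hT)
  have hmean : ∫ ω, (Q⁻¹ * ∑ t, G t ω * (G t ω)ᵀ).trace ∂μ ≤ T * Q.trace := by
    simpa using integral_trace_inv_mul_sum_le hint hQ hvar
  have hintegrable := integrable_trace_mul_sum hint Q⁻¹
  calc _ ≤ ∫ ω, (c⁻¹ * (Q⁻¹ * ∑ t, G t ω * (G t ω)ᵀ).trace + c * Q.trace) / 2 ∂μ :=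
        integral_mono_of_nonneg (.of_forall fun _ => nuclearNorm_nonneg _)
          (((hintegrable.const_mul _).add (integrable_const _)).div_const _)
          (.of_forall fun ω => nuclearNorm_psdSqrt_le (hS ω) hQ hc)
    _ = (c⁻¹ * ∫ ω, (Q⁻¹ * ∑ t, G t ω * (G t ω)ᵀ).trace ∂μ + c * Q.trace) / 2 := by
        rw [integral_div, integral_add (hintegrable.const_mul _) (integrable_const _),
          integral_const_mul, integral_const, probReal_univ, one_smul]
    _ ≤ (c⁻¹ * (T * Q.trace) + c * Q.trace) / 2 := by gcongr
    _ = c * nuclearNorm Q := by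
        have hcc : c ^ 2 = T := Real.sq_sqrt (Nat.cast_nonneg T)
        rw [nuclearNorm_eq_trace hQ.posSemidef, ← hcc]
        field_simp
        ring

/-- let `G_0, ..., G_{T-1}` be random matrices in `ℝ^{m×n}` and
`Q ∈ ℝ^{m×m}` symmetric positive definite with `E[G_t G_tᵀ] ⪯ Q²` for every `t`. Then
`E[‖(∑_t G_t G_tᵀ)^{1/2}‖_*] ≤ √T · ‖Q‖_*`. -/
theorem stmt17 (m n T : ℕ)
    (Ω : Type) [MeasurableSpace Ω] (μ : Measure Ω) [IsProbabilityMeasure μ]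
    (G : Fin T → Ω → Matrix (Fin m) (Fin n) ℝ)
    (hmeas : ∀ t a b, Measurable fun ω => G t ω a b)
    (hint : ∀ t a b, Integrable (fun ω => (G t ω * (G t ω)ᵀ) a b) μ)
    (Q : Matrix (Fin m) (Fin m) ℝ) (hQ : Q.PosDef)
    (hvar : ∀ t,
      (Q * Q - Matrix.of fun a b => ∫ ω, (G t ω * (G t ω)ᵀ) a b ∂μ).PosSemidef) :
    ∫ ω, nuclearNorm (psdSqrt (∑ t, G t ω * (G t ω)ᵀ)) ∂μ ≤
      Real.sqrt T * nuclearNorm Q :=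
  stmt17_general m n T Ω μ G hint Q hQ hvar
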